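/- Let q be a quadratic form over a field F of characteristic ≠ 2 and let K be a field extension of F. Then for any integer i with 0 ≤ i ≤ i₀(q_K), there exists a subform q' of q such that dim(q') ≤ dim(q) − i and i₀(q'_K) = i₀(q_K) − i. -/

import Mathlib

open scoped BigOperators

namespace QForm

open MvPolynomial

/-- A quadratic form of dimension `n` over `F` is (represented by) a homogeneous polynomial
of degree `2` in `n` variables. `Anis F K P` says that `P` is anisotropic over the field
extension `K` of `F`. -/
def Anis (F K : Type) [Field F] [Field K] [Algebra F K] {n : ℕ}
    (P : MvPolynomial (Fin n) F) : Prop :=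
  ∀ v : Fin n → K, aeval v P = 0 → v = 0

/-- The isotropy index `i₀` of the quadratic form `P` after scalar extension to `K`:
the maximal dimension of a totally isotropic subspace. -/
noncomputable def i0 (F K : Type) [Field F] [Field K] [Algebra F K] {n : ℕ}
    (P : MvPolynomial (Fin n) F) : ℕ :=
  sSup {m | ∃ W : Submodule K (Fin n → K), (∀ v ∈ W, aeval v P = 0) ∧
    Module.finrank K W = m}

/-- Isometry of two quadratic forms over `F` (possibly with different ambient dimensions;
an isometry forces the dimensions to agree). -/
def Isom (F : Type) [Field F] {n m : ℕ} (P : MvPolynomial (Fin n) F)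
    (Q : MvPolynomial (Fin m) F) : Prop :=
  ∃ φ : (Fin n → F) ≃ₗ[F] (Fin m → F), ∀ v, aeval (φ v) Q = aeval v P

/-- Orthogonal sum of two quadratic forms. -/
noncomputable def orthSum (F : Type) [Field F] {n m : ℕ} (P : MvPolynomial (Fin n) F)
    (Q : MvPolynomial (Fin m) F) : MvPolynomial (Fin (n + m)) F :=
  rename (Fin.castAdd m) P + rename (Fin.natAdd n) Q

/-- `R` is a subform of `Q` : `Q ≅ R ⊥ S` for some quadratic form `S`. -/
def Subform (F : Type) [Field F] {n m : ℕ} (R : MvPolynomial (Fin n) F)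
    (Q : MvPolynomial (Fin m) F) : Prop :=
  ∃ (k : ℕ) (S : MvPolynomial (Fin k) F), S.IsHomogeneous 2 ∧ Isom F Q (orthSum F R S)

/-- The dehomogenization of `P` at the last variable: the equation of the standard affine
chart of the projective hypersurface `{P = 0}`. -/
noncomputable def chart (F : Type) [Field F] {n : ℕ} (P : MvPolynomial (Fin (n + 1)) F) :
    MvPolynomial (Fin n) F :=
  aeval (Fin.lastCases 1 X) P

/-- `K` is (realizes) the function field `F(p)` of the projective quadric `{p = 0}`
attached to a quadratic form `p` of dimension `n + 2`: `K` is generated over `F` by a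
point `x` of the affine chart of the quadric whose ideal of relations is exactly the one
generated by the defining equation of the chart. -/
def IsFunFld (F : Type) [Field F] {n : ℕ} (P : MvPolynomial (Fin (n + 2)) F) (K : Type)
    [Field K] [Algebra F K] : Prop :=
  ∃ x : Fin (n + 1) → K,
    RingHom.ker (aeval x : MvPolynomial (Fin (n + 1)) F →ₐ[F] K) =
      Ideal.span {chart F P} ∧
    ∀ z : K, ∃ a b : MvPolynomial (Fin (n + 1)) F,
      aeval x b ≠ 0 ∧ z * aeval x b = aeval x a

/-- The diagonal quadratic form with coefficients `d`, as a polynomial. -/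
noncomputable def diagPoly (F : Type) [Field F] {n : ℕ} (d : Fin n → F) :
    MvPolynomial (Fin n) F :=
  ∑ i : Fin n, C (d i) * X i ^ 2

/-- The `k`-fold Pfister form `⟨⟨a₁,…,a_k⟩⟩ = ⟨1,-a₁⟩ ⊗ ⋯ ⊗ ⟨1,-a_k⟩`: the diagonal form
whose coefficients are the products of the `-a i` over all subsets of the index set. -/
noncomputable def pfisterPoly (F : Type) [Field F] {k : ℕ} (a : Fin k → F) :
    MvPolynomial (Fin (2 ^ k)) F :=
  diagPoly F (fun j => ∏ i : Fin k, if Nat.testBit (j : ℕ) (i : ℕ) then -a i else 1)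

/-- A quadratic form is quasilinear iff its evaluation is additive (this forces
characteristic `2`, and is equivalent to diagonalizability there). -/
def Quasilinear (F : Type) [Field F] {n : ℕ} (P : MvPolynomial (Fin n) F) : Prop :=
  ∀ v w : Fin n → F, aeval (v + w) P = aeval v P + aeval w P

end QForm


open MvPolynomial

namespace QFAux

variable {F : Type} [Field F]

lemma degree_pair {N : ℕ} (i j : Fin N) :
    (Finsupp.single i 1 + Finsupp.single j 1).degree = 2 := by
  have := Finsupp.card_toMultiset (Finsupp.single i 1 + Finsupp.single j 1)
  rw [Finsupp.toMultiset_add, Finsupp.toMultiset_single, Finsupp.toMultiset_single] at this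
  simp at this
  rw [map_add, Finsupp.degree_single, Finsupp.degree_single]

lemma degree_eq_sum {N : ℕ} (m : Fin N →₀ ℕ) :
    m.degree = Multiset.card m.toMultiset := by
  rw [Finsupp.card_toMultiset, Finsupp.degree, Finsupp.sum]
  rfl

lemma pair_of_degree_two {N : ℕ} {m : Fin N →₀ ℕ} (hm : m.degree = 2) :
    ∃ a b : Fin N, m = Finsupp.single a 1 + Finsupp.single b 1 := by
  have h2 : Multiset.card m.toMultiset = 2 := by rw [← degree_eq_sum]; exact hm
  obtain ⟨a, b, hab⟩ := Multiset.card_eq_two.mp h2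
  refine ⟨a, b, ?_⟩
  have h3 : Finsupp.toMultiset m =
      Finsupp.toMultiset (Finsupp.single a 1 + Finsupp.single b 1) := by
    rw [hab, Finsupp.toMultiset_add, Finsupp.toMultiset_single, Finsupp.toMultiset_single]
    simp [Multiset.insert_eq_cons, ← Multiset.singleton_add]
  have := congrArg Multiset.toFinsupp h3
  rwa [Finsupp.toMultiset_toFinsupp, Finsupp.toMultiset_toFinsupp] at this

lemma pair_eq_pair_iff {N : ℕ} (i j a b : Fin N) :
    Finsupp.single i 1 + Finsupp.single j 1 = Finsupp.single a 1 + Finsupp.single b 1 ↔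
      (i = a ∧ j = b) ∨ (i = b ∧ j = a) := by
  constructor
  · intro h
    have h3 := congrArg Finsupp.toMultiset h
    rw [Finsupp.toMultiset_add, Finsupp.toMultiset_add, Finsupp.toMultiset_single,
      Finsupp.toMultiset_single, Finsupp.toMultiset_single, Finsupp.toMultiset_single] at h3
    simp only [one_smul, ← Multiset.singleton_add, Multiset.singleton_add] at h3
    rcases Multiset.cons_eq_cons.mp h3 with ⟨h1, h2⟩ | ⟨hne, cs, hcs1, hcs2⟩
    · exact Or.inl ⟨h1, Multiset.singleton_inj.mp h2⟩
    · have hcs : cs = 0 := by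
        have := congrArg Multiset.card hcs1
        simpa using this.symm
      subst hcs
      simp only [Multiset.cons_zero] at hcs1 hcs2
      exact Or.inr ⟨Multiset.singleton_inj.mp hcs2.symm, Multiset.singleton_inj.mp hcs1⟩
  · rintro (⟨rfl, rfl⟩ | ⟨rfl, rfl⟩)
    · rfl
    · exact add_comm _ _

end QFAux

namespace Part2
variable {F : Type} [Field F]

lemma sum_pair {n : ℕ} (a b : Fin n) (f : Fin n → Fin n → F) :
    (∑ i : Fin n, ∑ j : Fin n, if i = a ∧ j = b then f i j else 0) = f a b := by
  simp [ite_and, Finset.sum_ite_eq']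

lemma exists_symm_decomp {n : ℕ} {q : MvPolynomial (Fin n) F} (h2 : (2 : F) ≠ 0)
    (hq : q.IsHomogeneous 2) :
    ∃ A : Matrix (Fin n) (Fin n) F, A.IsSymm ∧
      q = ∑ i : Fin n, ∑ j : Fin n, C (A i j) * (X i * X j) := by
  classical
  haveI : NeZero (2 : F) := ⟨h2⟩
  set A : Matrix (Fin n) (Fin n) F := Matrix.of fun i j =>
    if i = j then coeff (Finsupp.single i 2) q
    else coeff (Finsupp.single i 1 + Finsupp.single j 1) q / 2 with hA
  have hAsymm : A.IsSymm := by
    ext i j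
    simp only [Matrix.transpose_apply, hA, Matrix.of_apply]
    by_cases h : i = j
    · simp [h]
    · rw [if_neg h, if_neg (Ne.symm h), add_comm]
  have hAs : ∀ i j, A i j = if i = j then coeff (Finsupp.single i 2) q
      else coeff (Finsupp.single i 1 + Finsupp.single j 1) q / 2 := fun i j => rfl
  refine ⟨A, hAsymm, ?_⟩
  have hmon : ∀ (i j : Fin n) (c : F),
      C c * (X i * X j) = monomial (Finsupp.single i 1 + Finsupp.single j 1) c := by
    intro i j c
    rw [MvPolynomial.X, MvPolynomial.X, MvPolynomial.monomial_mul, MvPolynomial.C_mul_monomial]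
    ring_nf
  apply MvPolynomial.ext
  intro m
  rw [MvPolynomial.coeff_sum]
  simp only [MvPolynomial.coeff_sum, hmon, MvPolynomial.coeff_monomial]
  by_cases hdeg : m.degree = 2
  · obtain ⟨a, b, rfl⟩ := QFAux.pair_of_degree_two hdeg
    simp only [QFAux.pair_eq_pair_iff]
    by_cases hab : a = b
    · subst hab
      have : ∀ i j : Fin n, ((i = a ∧ j = a) ∨ (i = a ∧ j = a)) = (i = a ∧ j = a) := by
        intro i j; simp
      simp only [and_self_left, or_self]
      rw [sum_pair a a (fun i j => A i j)]
      rw [hAs, if_pos rfl]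
      congr 1
      rw [← Finsupp.single_add]
    · have hsplit : ∀ i j : Fin n,
          (if (i = a ∧ j = b) ∨ (i = b ∧ j = a) then A i j else 0) =
          (if i = a ∧ j = b then A i j else 0) + (if i = b ∧ j = a then A i j else 0) := by
        intro i j
        rcases Classical.em (i = a ∧ j = b) with h1 | h1 <;>
          rcases Classical.em (i = b ∧ j = a) with hh2 | hh2
        · exact absurd (h1.1.symm.trans hh2.1) hab
        · simp [h1, hh2]
          exact fun h _ => absurd h hab
        · simp [h1, hh2]
          exact fun h _ => absurd h.symm hab
        · simp [h1, hh2]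
      simp only [hsplit, Finset.sum_add_distrib]
      rw [sum_pair a b (fun i j => A i j), sum_pair b a (fun i j => A i j)]
      rw [hAs, hAs, if_neg hab, if_neg (Ne.symm hab)]
      rw [add_comm (Finsupp.single b 1)]
      exact (add_halves _).symm
  · rw [hq.coeff_eq_zero hdeg]
    symm
    apply Finset.sum_eq_zero
    intro i _
    apply Finset.sum_eq_zero
    intro j _
    rw [if_neg]
    intro h
    exact hdeg (h ▸ QFAux.degree_pair i j)

end Part2

namespace Part3
open Matrix
variable {F : Type} [Field F]

lemma single_dot (n : ℕ) (A : Matrix (Fin n) (Fin n) F) (i j : Fin n) :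
    (Pi.single i 1 : Fin n → F) ⬝ᵥ (A *ᵥ (Pi.single j 1 : Fin n → F)) = A i j := by
  simp [dotProduct, Matrix.mulVec, Pi.single_apply, Finset.sum_ite_eq,
    Finset.sum_ite_eq']

lemma symm_ext {n : ℕ} (h2 : (2 : F) ≠ 0) {A B : Matrix (Fin n) (Fin n) F}
    (hA : A.IsSymm) (hB : B.IsSymm)
    (h : ∀ v : Fin n → F, v ⬝ᵥ (A *ᵥ v) = v ⬝ᵥ (B *ᵥ v)) : A = B := by
  have key : ∀ i j, A i j + A j i = B i j + B j i := by
    intro i j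
    have h1 := h (Pi.single i 1 + Pi.single j 1)
    have hii := h (Pi.single i 1)
    have hjj := h (Pi.single j 1)
    simp only [Matrix.mulVec_add, dotProduct_add, add_dotProduct,
      single_dot] at h1 hii hjj
    linear_combination h1 - hii - hjj
  ext i j
  have hAij : A j i = A i j := by
    conv_lhs => rw [← hA, Matrix.transpose_apply]
  have hBij : B j i = B i j := by
    conv_lhs => rw [← hB, Matrix.transpose_apply]
  have hkey := key i j
  rw [hAij, hBij] at hkey
  have h4 : 2 * A i j = 2 * B i j := by linear_combination hkey
  exact mul_left_cancel₀ h2 h4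

lemma matrix_congr_diagonal {n : ℕ} (h2 : (2 : F) ≠ 0) (A : Matrix (Fin n) (Fin n) F)
    (hA : A.IsSymm) :
    ∃ (N : Matrix (Fin n) (Fin n) F) (d : Fin n → F), IsUnit N ∧
      A = Nᵀ * Matrix.diagonal d * N := by
  classical
  haveI : Invertible (2 : F) := invertibleOfNonzero h2
  obtain ⟨w, ⟨iso⟩⟩ := QuadraticForm.equivalent_weightedSumSquares (A.toQuadraticMap')
  have hfr : Module.finrank F (Fin n → F) = n := Module.finrank_fin_fun F
  let ψ : (Fin n → F) ≃ₗ[F] (Fin n → F) :=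
    iso.toLinearEquiv.trans (LinearEquiv.funCongrLeft F F (finCongr hfr.symm))
  let d : Fin n → F := fun i => w (finCongr hfr.symm i)
  have hψ : ∀ v : Fin n → F, A.toQuadraticMap' v = ∑ i : Fin n, d i * (ψ v i * ψ v i) := by
    intro v
    have happ := iso.map_app v
    rw [QuadraticMap.weightedSumSquares_apply] at happ
    rw [← happ]
    rw [← Fintype.sum_equiv (finCongr hfr.symm)
      (fun i => d i * (ψ v i * ψ v i)) (fun i => w i • (iso v i * iso v i))]
    intro i
    simp [d, ψ, smul_eq_mul, LinearEquiv.funCongrLeft]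
  let N := LinearMap.toMatrix' (ψ : (Fin n → F) →ₗ[F] (Fin n → F))
  have hNv : ∀ v, N *ᵥ v = ψ v := by
    intro v
    have := Matrix.toLin'_toMatrix' (ψ : (Fin n → F) →ₗ[F] (Fin n → F))
    calc N *ᵥ v = Matrix.toLin' N v := by rw [Matrix.toLin'_apply]
    _ = ψ v := by rw [this]; rfl
  have hNunit : IsUnit N := by
    refine ⟨⟨N, LinearMap.toMatrix' (ψ.symm : (Fin n → F) →ₗ[F] (Fin n → F)), ?_, ?_⟩, rfl⟩
    · rw [← LinearMap.toMatrix'_comp, ← LinearMap.toMatrix'_id (R := F) (n := Fin n)]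
      congr 1
      ext v : 1
      simp
    · rw [← LinearMap.toMatrix'_comp, ← LinearMap.toMatrix'_id (R := F) (n := Fin n)]
      congr 1
      ext v : 1
      simp
  refine ⟨N, d, hNunit, ?_⟩
  apply symm_ext h2 hA
  · rw [Matrix.IsSymm]
    rw [Matrix.transpose_mul, Matrix.transpose_mul, Matrix.transpose_transpose,
      Matrix.diagonal_transpose, mul_assoc]
  · intro v
    have hAv : v ⬝ᵥ (A *ᵥ v) = A.toQuadraticMap' v := by
      show v ⬝ᵥ (A *ᵥ v) = LinearMap.BilinMap.toQuadraticMap (Matrix.toLinearMap₂' F A) v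
      rw [LinearMap.BilinMap.toQuadraticMap_apply]
      rw [Matrix.toLinearMap₂'_apply']
    rw [hAv, hψ]
    rw [Matrix.mul_assoc, ← Matrix.mulVec_mulVec, ← Matrix.mulVec_mulVec,
      Matrix.dotProduct_mulVec, Matrix.vecMul_transpose, hNv]
    simp only [dotProduct, Matrix.mulVec_diagonal]
    exact Finset.sum_congr rfl fun x _ => by ring

end Part3


open MvPolynomial QForm

namespace Part4
open Matrix

variable {F K : Type} [Field F] [Field K] [Algebra F K]

/-- The set of dimensions of totally isotropic subspaces. -/
def iSet (F K : Type) [Field F] [Field K] [Algebra F K] {n : ℕ}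
    (P : MvPolynomial (Fin n) F) : Set ℕ :=
  {m | ∃ W : Submodule K (Fin n → K), (∀ v ∈ W, aeval v P = 0) ∧
    Module.finrank K W = m}

lemma i0_def {n : ℕ} (P : MvPolynomial (Fin n) F) :
    i0 F K P = sSup (iSet F K P) := rfl

lemma zero_mem_iSet {n : ℕ} {P : MvPolynomial (Fin n) F} (hP : P.IsHomogeneous 2) :
    0 ∈ iSet F K P := by
  refine ⟨⊥, ?_, finrank_bot K _⟩
  intro v hv
  rw [Submodule.mem_bot] at hv
  subst hv
  rw [show (0 : Fin n → K) = (fun _ => (0 : K)) from rfl]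
  rw [show (fun _ : Fin n => (0 : K)) = (0 : Fin n → K) from rfl]
  rw [MvPolynomial.aeval_zero]
  have : constantCoeff P = 0 := by
    rw [show (constantCoeff P) = coeff 0 P from rfl]
    exact hP.coeff_eq_zero (by simp [map_zero])
  rw [this, map_zero]

lemma mem_iSet_le {n : ℕ} {P : MvPolynomial (Fin n) F} {m : ℕ} (h : m ∈ iSet F K P) :
    m ≤ n := by
  obtain ⟨W, _, rfl⟩ := h
  calc Module.finrank K W ≤ Module.finrank K (Fin n → K) := Submodule.finrank_le W
  _ = n := Module.finrank_fin_fun K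

lemma bddAbove_iSet {n : ℕ} (P : MvPolynomial (Fin n) F) :
    BddAbove (iSet F K P) := ⟨n, fun _ h => mem_iSet_le h⟩

lemma le_i0 {n : ℕ} {P : MvPolynomial (Fin n) F} {m : ℕ} (h : m ∈ iSet F K P) :
    m ≤ i0 F K P := le_csSup (bddAbove_iSet P) h

lemma i0_mem {n : ℕ} {P : MvPolynomial (Fin n) F} (hP : P.IsHomogeneous 2) :
    i0 F K P ∈ iSet F K P :=
  Nat.sSup_mem ⟨0, zero_mem_iSet hP⟩ (bddAbove_iSet P)

lemma i0_le {n : ℕ} {P : MvPolynomial (Fin n) F} (hP : P.IsHomogeneous 2) :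
    i0 F K P ≤ n := mem_iSet_le (i0_mem hP)

lemma iSet_subset {n m : ℕ} {P : MvPolynomial (Fin n) F} {Q : MvPolynomial (Fin m) F}
    (φ : (Fin n → K) ≃ₗ[K] (Fin m → K)) (h : ∀ v, aeval (φ v) Q = aeval v P) :
    iSet F K P ⊆ iSet F K Q := by
  rintro k ⟨W, hW, hrk⟩
  refine ⟨W.map (φ : (Fin n → K) →ₗ[K] (Fin m → K)), ?_, ?_⟩
  · rintro v hv
    rw [Submodule.mem_map] at hv
    obtain ⟨u, hu, rfl⟩ := hv
    rw [show (φ : (Fin n → K) →ₗ[K] (Fin m → K)) u = φ u from rfl, h]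
    exact hW u hu
  · rw [LinearEquiv.finrank_map_eq]
    exact hrk

lemma i0_congr {n m : ℕ} {P : MvPolynomial (Fin n) F} {Q : MvPolynomial (Fin m) F}
    (φ : (Fin n → K) ≃ₗ[K] (Fin m → K)) (h : ∀ v, aeval (φ v) Q = aeval v P) :
    i0 F K P = i0 F K Q := by
  have h' : ∀ w, aeval (φ.symm w) P = aeval w Q := by
    intro w
    rw [← h (φ.symm w), φ.apply_symm_apply]
  rw [i0_def, i0_def]
  congr 1
  exact Set.Subset.antisymm (iSet_subset φ h) (iSet_subset φ.symm h')

lemma isHomogeneous_diagPoly {n : ℕ} (d : Fin n → F) :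
    (diagPoly F d).IsHomogeneous 2 := by
  apply MvPolynomial.IsHomogeneous.sum
  intro i _
  have := (isHomogeneous_C (Fin n) (d i)).mul ((isHomogeneous_X F i).pow 2)
  simpa using this

lemma aeval_diagPoly {n : ℕ} (d : Fin n → F) (v : Fin n → K) :
    aeval v (diagPoly F d) = ∑ i, algebraMap F K (d i) * v i ^ 2 := by
  rw [diagPoly, map_sum]
  exact Finset.sum_congr rfl fun i _ => by
    rw [_root_.map_mul, map_pow, aeval_C, aeval_X]

/-- Extension by zero in the first coordinate. -/
def consL (K : Type) [Field K] (m : ℕ) : (Fin m → K) →ₗ[K] (Fin (m + 1) → K) where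
  toFun v := Fin.cons 0 v
  map_add' v w := by
    funext i
    cases i using Fin.cases <;> simp
  map_smul' c v := by
    funext i
    cases i using Fin.cases <;> simp

lemma consL_inj (m : ℕ) : Function.Injective (consL K m) := by
  intro v w h
  funext i
  have := congrFun h i.succ
  simpa [consL] using this

lemma consL_zero (m : ℕ) (v : Fin m → K) : consL K m v 0 = 0 := rfl

lemma consL_succ (m : ℕ) (v : Fin m → K) (i : Fin m) : consL K m v i.succ = v i := by
  simp [consL]

lemma i0_drop_le {m : ℕ} (d : Fin (m + 1) → F) :
    i0 F K (diagPoly F (d ∘ Fin.succ)) ≤ i0 F K (diagPoly F d) := by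
  rw [i0_def, i0_def]
  apply csSup_le_csSup (bddAbove_iSet _) ⟨0, zero_mem_iSet (isHomogeneous_diagPoly _)⟩
  rintro k ⟨W, hW, hrk⟩
  refine ⟨W.map (consL K m), ?_, ?_⟩
  · rintro v hv
    rw [Submodule.mem_map] at hv
    obtain ⟨u, hu, rfl⟩ := hv
    have hu0 := hW u hu
    rw [aeval_diagPoly] at hu0 ⊢
    rw [Fin.sum_univ_succ, consL_zero]
    simp only [consL_succ]
    simpa using hu0
  · rw [← hrk]
    exact ((Submodule.equivMapOfInjective _ (consL_inj m) W).finrank_eq).symm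

lemma i0_le_drop_succ {m : ℕ} (d : Fin (m + 1) → F) :
    i0 F K (diagPoly F d) ≤ i0 F K (diagPoly F (d ∘ Fin.succ)) + 1 := by
  obtain ⟨W, hW, hrk⟩ := i0_mem (K := K) (isHomogeneous_diagPoly d)
  set ι := consL K m with hι
  set H := LinearMap.range ι with hH
  have hHrank : Module.finrank K H = m := by
    rw [hH, LinearMap.finrank_range_of_inj (consL_inj m), Module.finrank_fin_fun]
  set π : (Fin (m + 1) → K) →ₗ[K] (Fin m → K) := LinearMap.funLeft K K Fin.succ with hπ
  have hπι : ∀ u : Fin m → K, π (ι u) = u := by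
    intro u
    funext i
    simp [hπ, LinearMap.funLeft, hι, consL_succ]
  have hmem : ∀ v ∈ H, v 0 = 0 ∧ ι (π v) = v := by
    rintro v ⟨u, rfl⟩
    exact ⟨consL_zero m u, by rw [hπι]⟩
  set U := W ⊓ H with hU
  set W' := U.map π with hW'
  have hWU : Submodule.map ι W' = U := by
    apply le_antisymm
    · rintro x hx
      rw [Submodule.mem_map] at hx
      obtain ⟨y, hy, rfl⟩ := hx
      rw [hW', Submodule.mem_map] at hy
      obtain ⟨v, hv, rfl⟩ := hy
      rw [(hmem v hv.2).2]
      exact hv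
    · intro v hv
      rw [Submodule.mem_map]
      exact ⟨π v, Submodule.mem_map_of_mem hv, (hmem v hv.2).2⟩
  have hrkW' : Module.finrank K W' = Module.finrank K U := by
    rw [← hWU]
    exact (Submodule.equivMapOfInjective ι (consL_inj m) W').finrank_eq
  have hiso : ∀ u ∈ W', aeval u (diagPoly F (d ∘ Fin.succ)) = 0 := by
    rintro u hu
    rw [hW', Submodule.mem_map] at hu
    obtain ⟨v, hv, rfl⟩ := hu
    have h0 : v 0 = 0 := (hmem v hv.2).1
    have hv0 := hW v hv.1
    rw [aeval_diagPoly] at hv0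
    rw [Fin.sum_univ_succ, h0] at hv0
    simp only [ne_eq, OfNat.ofNat_ne_zero, not_false_eq_true, zero_pow, mul_zero,
      zero_add] at hv0
    rw [aeval_diagPoly]
    calc ∑ i : Fin m, algebraMap F K ((d ∘ Fin.succ) i) * (π v) i ^ 2
        = ∑ i : Fin m, algebraMap F K (d (Fin.succ i)) * v (Fin.succ i) ^ 2 :=
          Finset.sum_congr rfl fun i _ => by
            simp [hπ, LinearMap.funLeft]
    _ = 0 := hv0
  have h1 : Module.finrank K W' ∈ iSet F K (diagPoly F (d ∘ Fin.succ)) :=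
    ⟨W', hiso, rfl⟩
  have h2 := le_i0 h1
  have hsum := Submodule.finrank_sup_add_finrank_inf_eq W H
  have h3 : Module.finrank K ↥(W ⊔ H) ≤ m + 1 :=
    le_trans (Submodule.finrank_le _) (le_of_eq (Module.finrank_fin_fun K))
  rw [← hU] at hsum
  omega

lemma chain : ∀ {n : ℕ} (d : Fin n → F) (i : ℕ), i ≤ i0 F K (diagPoly F d) →
    ∃ (n' : ℕ) (e : Fin n' ↪ Fin n), n' ≤ n - i ∧
      i0 F K (diagPoly F (d ∘ e)) = i0 F K (diagPoly F d) - i := by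
  intro n
  induction n with
  | zero =>
    intro d i hi
    have h0 : i0 F K (diagPoly F d) ≤ 0 := i0_le (isHomogeneous_diagPoly d)
    have hi0 : i = 0 := by omega
    subst hi0
    refine ⟨0, Function.Embedding.refl _, by omega, by
      rw [show d ∘ ⇑(Function.Embedding.refl (Fin 0)) = d from rfl]; simp⟩
  | succ m IH =>
    intro d i hi
    rcases Nat.eq_zero_or_pos i with rfl | hpos
    · refine ⟨m + 1, Function.Embedding.refl _, by omega, by
        rw [show d ∘ ⇑(Function.Embedding.refl (Fin (m + 1))) = d from rfl]; simp⟩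
    · have h1 := i0_drop_le (K := K) d
      have h2 := i0_le_drop_succ (K := K) d
      have hcomp : ∀ (n' : ℕ) (e : Fin n' ↪ Fin m),
          d ∘ ⇑(e.trans (Fin.succEmb m)) = (d ∘ Fin.succ) ∘ ⇑e := by
        intro n' e
        funext x
        rfl
      by_cases hc : i0 F K (diagPoly F (d ∘ Fin.succ)) = i0 F K (diagPoly F d)
      · obtain ⟨n', e, hn', he⟩ := IH (d ∘ Fin.succ) i (by omega)
        refine ⟨n', e.trans (Fin.succEmb m), by omega, ?_⟩
        rw [hcomp, he, hc]
      · obtain ⟨n', e, hn', he⟩ := IH (d ∘ Fin.succ) (i - 1) (by omega)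
        refine ⟨n', e.trans (Fin.succEmb m), by omega, ?_⟩
        rw [hcomp, he]
        omega

end Part4

namespace Part5
open Matrix MvPolynomial QForm Part4

variable {F K : Type} [Field F] [Field K] [Algebra F K]

lemma exists_diag {n : ℕ} {q : MvPolynomial (Fin n) F} (h2 : (2 : F) ≠ 0)
    (hq : q.IsHomogeneous 2) :
    ∃ (N : Matrix (Fin n) (Fin n) F) (d : Fin n → F), IsUnit N ∧
      ∀ (K : Type) [Field K] [Algebra F K], ∀ v : Fin n → K,
        aeval v q = ∑ i, algebraMap F K (d i) *
          ((N.map (algebraMap F K)) *ᵥ v) i ^ 2 := by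
  obtain ⟨A, hAsymm, hdecomp⟩ := Part2.exists_symm_decomp h2 hq
  obtain ⟨N, d, hN, hAN⟩ := Part3.matrix_congr_diagonal h2 A hAsymm
  refine ⟨N, d, hN, ?_⟩
  intro K _ _ v
  have h1 : aeval v q = ∑ i, ∑ j, algebraMap F K (A i j) * (v i * v j) := by
    rw [hdecomp, map_sum]
    refine Finset.sum_congr rfl fun i _ => ?_
    rw [map_sum]
    refine Finset.sum_congr rfl fun j _ => ?_
    rw [_root_.map_mul, _root_.map_mul, aeval_C, aeval_X, aeval_X]
  set AK := A.map (algebraMap F K) with hAK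
  set NK := N.map (algebraMap F K) with hNK
  have h2' : v ⬝ᵥ (AK *ᵥ v) = ∑ i, ∑ j, algebraMap F K (A i j) * (v i * v j) := by
    simp only [dotProduct, Matrix.mulVec, Matrix.map_apply, hAK, Finset.mul_sum]
    exact Finset.sum_congr rfl fun i _ => Finset.sum_congr rfl fun j _ => by ring
  have hAKeq : AK = NKᵀ * Matrix.diagonal (fun i => algebraMap F K (d i)) * NK := by
    rw [hAK, hAN, hNK]
    rw [Matrix.map_mul, Matrix.map_mul, Matrix.transpose_map,
      Matrix.diagonal_map (map_zero _)]
  rw [h1, ← h2', hAKeq, Matrix.mul_assoc, ← Matrix.mulVec_mulVec, ← Matrix.mulVec_mulVec,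
    Matrix.dotProduct_mulVec, Matrix.vecMul_transpose]
  simp only [dotProduct, Matrix.mulVec_diagonal, Function.comp]
  exact Finset.sum_congr rfl fun x _ => by ring

lemma isomK {n : ℕ} {q : MvPolynomial (Fin n) F} {N : Matrix (Fin n) (Fin n) F}
    {d : Fin n → F} (hN : IsUnit N)
    (hrep : ∀ v : Fin n → K, aeval v q = ∑ i, algebraMap F K (d i) *
      ((N.map (algebraMap F K)) *ᵥ v) i ^ 2) :
    ∃ φ : (Fin n → K) ≃ₗ[K] (Fin n → K),
      ∀ v, aeval (φ v) (diagPoly F d) = aeval v q := by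
  have hNK : IsUnit (N.map (algebraMap F K)) :=
    hN.map (RingHom.mapMatrix (algebraMap F K))
  let inv := Classical.choice hNK.nonempty_invertible
  let φ := (N.map (algebraMap F K)).toLinearEquiv' inv
  refine ⟨φ, fun v => ?_⟩
  have hφ : φ v = (N.map (algebraMap F K)) *ᵥ v := by
    show Matrix.toLin' (N.map (algebraMap F K)) v = _
    rw [Matrix.toLin'_apply]
  rw [hφ, aeval_diagPoly, hrep v]

lemma subform_of_embedding {n n' : ℕ} (d : Fin n → F) (e : Fin n' ↪ Fin n) :
    Subform F (diagPoly F (d ∘ ⇑e)) (diagPoly F d) := by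
  classical
  set k := n - n' with hk
  have hcard1 : Fintype.card (Set.range ⇑e) = n' :=
    (Set.card_range_of_injective e.injective).trans (Fintype.card_fin n')
  have hcard : Fintype.card ((Set.range ⇑e)ᶜ : Set (Fin n)) = k := by
    rw [Fintype.card_compl_set, hcard1, Fintype.card_fin]
  let c : ((Set.range ⇑e)ᶜ : Set (Fin n)) ≃ Fin k := Fintype.equivFinOfCardEq hcard
  let E : Sum (Fin n') (Fin k) ≃ Fin n :=
    (Equiv.sumCongr (Equiv.ofInjective ⇑e e.injective) c.symm).trans
      (Equiv.sumCompl (fun x => x ∈ Set.range ⇑e))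
  have hEl : ∀ i : Fin n', E (Sum.inl i) = e i := fun i => rfl
  refine ⟨k, diagPoly F (fun j => d (E (Sum.inr j))), isHomogeneous_diagPoly _, ?_⟩
  let g : Fin (n' + k) ≃ Fin n := finSumFinEquiv.symm.trans E
  refine ⟨LinearEquiv.funCongrLeft F F g, fun v => ?_⟩
  have hφ : (LinearEquiv.funCongrLeft F F g) v = v ∘ ⇑g := rfl
  rw [hφ, orthSum, map_add, aeval_rename, aeval_rename, aeval_diagPoly, aeval_diagPoly,
    aeval_diagPoly]
  rw [← Equiv.sum_comp E (fun x => algebraMap F F (d x) * v x ^ 2)]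
  rw [Fintype.sum_sum_type]
  congr 1
  · refine Finset.sum_congr rfl fun i _ => ?_
    have hg : ((v ∘ ⇑g) ∘ Fin.castAdd k) i = v (E (Sum.inl i)) := by
      simp only [Function.comp_apply]
      congr 1
      simp [g, finSumFinEquiv_symm_apply_castAdd]
    rw [hg, hEl]
    rfl
  · refine Finset.sum_congr rfl fun j _ => ?_
    have hg : ((v ∘ ⇑g) ∘ Fin.natAdd n') j = v (E (Sum.inr j)) := by
      simp only [Function.comp_apply]
      congr 1
      simp [g, finSumFinEquiv_symm_apply_natAdd]
    rw [hg]

end Part5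




/-- Let `q` be a quadratic form over a field `F` of characteristic `≠ 2`
and let `K` be a field extension of `F`. Then for any `0 ≤ i ≤ i₀(q_K)` there exists a
subform `q'` of `q` such that `dim q' ≤ dim q − i` and `i₀(q'_K) = i₀(q_K) − i`. -/
theorem statement4 (F : Type) [Field F] (hchar : (2 : F) ≠ 0) {n : ℕ}
    (q : MvPolynomial (Fin n) F) (hqh : q.IsHomogeneous 2)
    (K : Type) [Field K] [Algebra F K]
    (i : ℕ) (hi : i ≤ QForm.i0 F K q) :
    ∃ (n' : ℕ) (q' : MvPolynomial (Fin n') F), q'.IsHomogeneous 2 ∧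
      QForm.Subform F q' q ∧ n' ≤ n - i ∧ QForm.i0 F K q' = QForm.i0 F K q - i := by
  obtain ⟨N, d, hN, hrep⟩ := Part5.exists_diag hchar hqh
  obtain ⟨φK, hφK⟩ := Part5.isomK (K := K) hN (hrep K)
  have hEq : QForm.i0 F K q = QForm.i0 F K (QForm.diagPoly F d) := Part4.i0_congr φK hφK
  obtain ⟨n', e, hn', he⟩ := Part4.chain (K := K) d i (hEq ▸ hi)
  obtain ⟨φF, hφF⟩ := Part5.isomK (K := F) hN (hrep F)
  obtain ⟨k, S, hS, ⟨ψ, hψ⟩⟩ := Part5.subform_of_embedding d e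
  refine ⟨n', QForm.diagPoly F (d ∘ ⇑e), Part4.isHomogeneous_diagPoly _,
    ⟨k, S, hS, ⟨φF.trans ψ, ?_⟩⟩, hn', ?_⟩
  · intro v
    rw [LinearEquiv.trans_apply, hψ, hφF]
  · rw [he, hEq]
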